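/- Let (θ₁, φ₁), (θ₂, φ₂), (θ₃, φ₃) be independent, each uniformly distributed on [0,2π]², and set hᵢ := sin θᵢ·sin φᵢ. Then for every real a and all real s₁, s₂, E[cos(s₁·a·(h₁ − h₃) − s₂·a·(h₂ − h₃))] = J₀(s₁·a/2)² · J₀(s₂·a/2)² · J₀((s₁ − s₂)·a/2)². -/

import Mathlib

open Real MeasureTheory Finset

/-- Bessel function of the first kind of order zero (integral representation). -/
noncomputable def J₀ (x : ℝ) : ℝ :=
  (1 / (2 * π)) * ∫ t in (0:ℝ)..(2 * π), Real.cos (x * Real.sin t)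

/-- Expectation over three independent pairs of angles, each uniform on `[0, 2π]²`. -/
noncomputable def E6 (f : ℝ → ℝ → ℝ → ℝ → ℝ → ℝ → ℝ) : ℝ :=
  (1 / (2 * π) ^ 6) *
    ∫ θ₁ in (0:ℝ)..(2 * π), ∫ φ₁ in (0:ℝ)..(2 * π),
      ∫ θ₂ in (0:ℝ)..(2 * π), ∫ φ₂ in (0:ℝ)..(2 * π),
        ∫ θ₃ in (0:ℝ)..(2 * π), ∫ φ₃ in (0:ℝ)..(2 * π), f θ₁ φ₁ θ₂ φ₂ θ₃ φ₃

/-! Writing `2 sin θ sin φ = cos (θ - φ) - cos (θ + φ)` and expanding the cosine of the difference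
turns `∫∫ cos (x sin θ sin φ)` into two integrals of products `F (θ - φ) G (θ + φ)` of
`2π`-periodic functions; after the change of variables `(θ, φ) ↦ (θ - φ, θ + φ)` each factorises,
giving `(2π J₀ (x/2))²` (the `sin`-term integrates to zero by antiperiodicity). Adding a constant
phase `c` only multiplies the result by `cos c`, since `∫ sin (k sin φ) dφ = 0`. Regrouping the
phase as `s₁ a h₁ - s₂ a h₂ + (s₂ - s₁) a h₃` and integrating out the pairs `(θ₃, φ₃)`,
`(θ₂, φ₂)`, `(θ₁, φ₁)` in turn gives the three squared Bessel factors. -/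

namespace Function

variable {f F G : ℝ → ℝ} {T : ℝ}

theorem Antiperiodic.intervalIntegral_zero_two_mul (hf : Antiperiodic f T) (hc : Continuous f) :
    ∫ x in 0..2 * T, f x = 0 := by
  have shift : ∫ x in T..2 * T, f x = ∫ x in 0..T, f (x + T) := by
    rw [intervalIntegral.integral_comp_add_right, zero_add, two_mul]
  rw [← intervalIntegral.integral_add_adjacent_intervals (b := T)
    (hc.intervalIntegrable _ _) (hc.intervalIntegrable _ _), shift]
  simp [hf _]

theorem Periodic.intervalIntegral_comp_two_mul_sub (hf : Periodic f T) (hc : Continuous f)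
    (x : ℝ) : ∫ θ in 0..T, f (2 * θ - x) = ∫ t in 0..T, f t := by
  have h := hf.intervalIntegral_add_zsmul_eq 2 (-x) (fun _ _ => hc.intervalIntegrable _ _)
  rw [intervalIntegral.integral_comp_mul_sub _ two_ne_zero, mul_zero, zero_sub,
    show 2 * T - x = -x + (2 : ℤ) • T by simp; ring, h, hf.intervalIntegral_add_eq (-x) 0,
    zero_add]
  simp

theorem Periodic.intervalIntegral_intervalIntegral_comp_sub_mul_comp_add
    (hF : Periodic F T) (hG : Periodic G T) (hFc : Continuous F) (hGc : Continuous G) :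
    ∫ θ in 0..T, ∫ φ in 0..T, F (θ - φ) * G (θ + φ) =
      (∫ t in 0..T, F t) * ∫ t in 0..T, G t := by
  have inner (θ : ℝ) : ∫ φ in 0..T, F (θ - φ) * G (θ + φ) =
      ∫ x in 0..T, F (2 * θ - x) * G x := by
    have hper : Periodic (fun x => F (2 * θ - x) * G x) T := fun x => by
      simp only [show 2 * θ - (x + T) = 2 * θ - x - T by ring, hF.sub_eq, hG x]
    have shift := intervalIntegral.integral_comp_add_left (fun x => F (2 * θ - x) * G x) θ
      (a := 0) (b := T)
    simp only [show ∀ φ, 2 * θ - (θ + φ) = θ - φ from fun φ => by ring, add_zero, add_comm θ T]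
      at shift
    rw [shift, add_comm T θ, hper.intervalIntegral_add_eq θ 0, zero_add]
  simp only [inner]
  have hcont : Continuous fun p : ℝ × ℝ => F (2 * p.1 - p.2) * G p.2 := by fun_prop
  rw [intervalIntegral_intervalIntegral_swap]
  · simp only [intervalIntegral.integral_mul_const, hF.intervalIntegral_comp_two_mul_sub hFc,
      intervalIntegral.integral_const_mul]
  · exact (hcont.continuousOn.integrableOn_compact (isCompact_uIcc.prod isCompact_uIcc)).mono_set
      (Set.prod_mono Set.uIoc_subset_uIcc Set.uIoc_subset_uIcc)

end Function

theorem J₀_neg (x : ℝ) : J₀ (-x) = J₀ x := by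
  simp [J₀, neg_mul, Real.cos_neg]

theorem integral_cos_mul_cos (u : ℝ) :
    ∫ t in 0..2 * π, Real.cos (u * Real.cos t) = 2 * π * J₀ u := by
  have hper : Function.Periodic (fun t => Real.cos (u * Real.sin t)) (2 * π) := fun t => by
    simp [Real.sin_add_two_pi]
  have shift := intervalIntegral.integral_comp_add_right (fun t => Real.cos (u * Real.sin t))
    (π / 2) (a := 0) (b := 2 * π)
  simp only [Real.sin_add_pi_div_two, zero_add, add_comm (2 * π)] at shift
  rw [shift, hper.intervalIntegral_add_eq (π / 2) 0, zero_add, J₀]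
  field_simp

theorem integral_sin_mul_cos (u : ℝ) : ∫ t in 0..2 * π, Real.sin (u * Real.cos t) = 0 :=
  Function.Antiperiodic.intervalIntegral_zero_two_mul (fun t => by simp [Real.cos_add_pi])
    (by fun_prop)

theorem integral_sin_mul_sin (u : ℝ) : ∫ t in 0..2 * π, Real.sin (u * Real.sin t) = 0 :=
  Function.Antiperiodic.intervalIntegral_zero_two_mul (fun t => by simp [Real.sin_add_pi])
    (by fun_prop)

theorem integral_integral_cos_mul_sin_mul_sin (x : ℝ) :
    ∫ θ in 0..2 * π, ∫ φ in 0..2 * π, Real.cos (x * (Real.sin θ * Real.sin φ)) =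
      (2 * π) ^ 2 * J₀ (x / 2) ^ 2 := by
  set C := fun t => Real.cos (x / 2 * Real.cos t)
  set S := fun t => Real.sin (x / 2 * Real.cos t)
  have split (θ φ : ℝ) : Real.cos (x * (Real.sin θ * Real.sin φ)) =
      C (θ - φ) * C (θ + φ) + S (θ - φ) * S (θ + φ) := by
    rw [← Real.cos_sub, Real.cos_sub θ φ, Real.cos_add θ φ]
    ring_nf
  have hC : Function.Periodic C (2 * π) := fun t => by simp [C, Real.cos_add_two_pi]
  have hS : Function.Periodic S (2 * π) := fun t => by simp [S, Real.cos_add_two_pi]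
  have add_inner (θ : ℝ) : ∫ φ in 0..2 * π, (C (θ - φ) * C (θ + φ) + S (θ - φ) * S (θ + φ)) =
      (∫ φ in 0..2 * π, C (θ - φ) * C (θ + φ)) + ∫ φ in 0..2 * π, S (θ - φ) * S (θ + φ) :=
    intervalIntegral.integral_add (Continuous.intervalIntegrable (by fun_prop) _ _)
      (Continuous.intervalIntegrable (by fun_prop) _ _)
  simp only [split, add_inner]
  rw [intervalIntegral.integral_add (Continuous.intervalIntegrable (by fun_prop) _ _)
      (Continuous.intervalIntegrable (by fun_prop) _ _),
    hC.intervalIntegral_intervalIntegral_comp_sub_mul_comp_add hC (by fun_prop) (by fun_prop),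
    hS.intervalIntegral_intervalIntegral_comp_sub_mul_comp_add hS (by fun_prop) (by fun_prop)]
  simp only [C, S, integral_cos_mul_cos, integral_sin_mul_cos]
  ring

theorem integral_integral_cos_add_mul_sin_mul_sin (c x : ℝ) :
    ∫ θ in 0..2 * π, ∫ φ in 0..2 * π, Real.cos (c + x * (Real.sin θ * Real.sin φ)) =
      (2 * π) ^ 2 * J₀ (x / 2) ^ 2 * Real.cos c := by
  have inner (θ : ℝ) : ∫ φ in 0..2 * π, Real.cos (c + x * (Real.sin θ * Real.sin φ)) =
      Real.cos c * ∫ φ in 0..2 * π, Real.cos (x * (Real.sin θ * Real.sin φ)) := by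
    simp only [Real.cos_add, ← mul_assoc x]
    rw [intervalIntegral.integral_sub (Continuous.intervalIntegrable (by fun_prop) _ _)
      (Continuous.intervalIntegrable (by fun_prop) _ _),
      intervalIntegral.integral_const_mul, intervalIntegral.integral_const_mul,
      integral_sin_mul_sin, mul_zero, sub_zero]
  simp only [inner, intervalIntegral.integral_const_mul, integral_integral_cos_mul_sin_mul_sin]
  ring

theorem stmt_8 (a s₁ s₂ : ℝ) :
    E6 (fun θ₁ φ₁ θ₂ φ₂ θ₃ φ₃ =>
      Real.cos (s₁ * a * (Real.sin θ₁ * Real.sin φ₁ - Real.sin θ₃ * Real.sin φ₃) -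
        s₂ * a * (Real.sin θ₂ * Real.sin φ₂ - Real.sin θ₃ * Real.sin φ₃)))
    = (J₀ (s₁ * a / 2)) ^ 2 * (J₀ (s₂ * a / 2)) ^ 2 * (J₀ ((s₁ - s₂) * a / 2)) ^ 2 := by
  -- the `0 +` lets the last pair `(θ₁, φ₁)` be integrated by the same lemma as the others
  have regroup (h₁ h₂ h₃ : ℝ) : s₁ * a * (h₁ - h₃) - s₂ * a * (h₂ - h₃) =
      ((0 + s₁ * a * h₁) + -s₂ * a * h₂) + (s₂ - s₁) * a * h₃ := by ring
  simp only [E6, regroup, integral_integral_cos_add_mul_sin_mul_sin,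
    intervalIntegral.integral_const_mul, Real.cos_zero]
  rw [show -s₂ * a / 2 = -(s₂ * a / 2) by ring,
    show (s₂ - s₁) * a / 2 = -((s₁ - s₂) * a / 2) by ring,
    J₀_neg, J₀_neg]
  field_simp
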